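/- Let λ ∈ ℝ. Real polynomials P(p) = Σᵢ₌₀⁴ aᵢpⁱ and Q(q) = Σᵢ₌₀⁴ bᵢqⁱ satisfy (p-q)²Q''(q) + 6(p-q)Q'(q) + 12Q(q) = (p-q)²P''(p) - 6(p-q)P'(p) + 12P(p) + 4λ(1-p²q²) for all p, q if and only if b₀ = a₀ + λ/3, b₁ = a₁, b₂ = a₂, b₃ = a₃, b₄ = a₄ - λ/3. -/

import Mathlib

/-!
For a quartic `f = c₀ + c₁ x + ⋯ + c₄ x⁴`, the expression `(p - q)² f''(q) + 6 (p - q) f'(q) + 12 f(q)`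
is `12` times the polarization of `f`, the biquadratic form
`c₀ + c₁ (p + q)/2 + c₂ (p² + 4pq + q²)/6 + c₃ pq(p + q)/2 + c₄ p²q²`, which is symmetric in `p, q`.
The right-hand side of the equation is the same expression for `P` with `p` and `q` exchanged,
hence also the polar form of `P`, and `4λ(1 - p²q²)` is the polar form of `λ/3 (1 - x⁴)`.
So the equation says that the polar form of `Q - P - λ/3 (1 - x⁴)` vanishes identically,
and a quartic with vanishing polar form is zero.
-/

theorem hasDerivAt_quartic (c₀ c₁ c₂ c₃ c₄ x : ℝ) :
    HasDerivAt (fun x => c₀ + c₁*x + c₂*x^2 + c₃*x^3 + c₄*x^4)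
      (c₁ + 2*c₂*x + 3*c₃*x^2 + 4*c₄*x^3) x := by
  have h := ((((hasDerivAt_id x).const_mul c₁).const_add c₀).add
    ((hasDerivAt_pow 2 x).const_mul c₂)).add ((hasDerivAt_pow 3 x).const_mul c₃)
    |>.add ((hasDerivAt_pow 4 x).const_mul c₄)
  simpa [Pi.add_def] using h.congr_deriv (by push_cast; ring)

theorem deriv_quartic (c₀ c₁ c₂ c₃ c₄ : ℝ) :
    deriv (fun x => c₀ + c₁*x + c₂*x^2 + c₃*x^3 + c₄*x^4)
      = fun x => c₁ + 2*c₂*x + 3*c₃*x^2 + 4*c₄*x^3 :=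
  funext fun x => (hasDerivAt_quartic c₀ c₁ c₂ c₃ c₄ x).deriv

theorem iteratedDeriv_two_quartic (c₀ c₁ c₂ c₃ c₄ : ℝ) :
    iteratedDeriv 2 (fun x => c₀ + c₁*x + c₂*x^2 + c₃*x^3 + c₄*x^4)
      = fun x => 2*c₂ + 6*c₃*x + 12*c₄*x^2 := by
  rw [iteratedDeriv_succ, iteratedDeriv_one, deriv_quartic]
  funext x
  have h := hasDerivAt_quartic c₁ (2*c₂) (3*c₃) (4*c₄) 0 x
  simp only [zero_mul, add_zero] at h
  exact (h.congr_deriv (by ring)).deriv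

def quarticPolarForm (c₀ c₁ c₂ c₃ c₄ p q : ℝ) : ℝ :=
  12*c₀ + 6*c₁*(p + q) + 2*c₂*(p^2 + 4*p*q + q^2) + 6*c₃*p*q*(p + q) + 12*c₄*p^2*q^2

theorem quarticPolarForm_comm (c₀ c₁ c₂ c₃ c₄ p q : ℝ) :
    quarticPolarForm c₀ c₁ c₂ c₃ c₄ p q = quarticPolarForm c₀ c₁ c₂ c₃ c₄ q p := by
  unfold quarticPolarForm; ring

theorem quarticPolarForm_eq_zero_iff (c₀ c₁ c₂ c₃ c₄ : ℝ) :
    (∀ p q, quarticPolarForm c₀ c₁ c₂ c₃ c₄ p q = 0) ↔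
      c₀ = 0 ∧ c₁ = 0 ∧ c₂ = 0 ∧ c₃ = 0 ∧ c₄ = 0 := by
  constructor
  · intro h
    have h00 := h 0 0
    have h10 := h 1 0
    have hm10 := h (-1) 0
    have h11 := h 1 1
    have h1m1 := h 1 (-1)
    simp only [quarticPolarForm] at h00 h10 hm10 h11 h1m1
    refine ⟨?_, ?_, ?_, ?_, ?_⟩ <;> linarith
  · rintro ⟨rfl, rfl, rfl, rfl, rfl⟩ p q
    simp [quarticPolarForm]

theorem taylor_quartic_eq_quarticPolarForm {f : ℝ → ℝ} {c₀ c₁ c₂ c₃ c₄ : ℝ}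
    (hf : ∀ x, f x = c₀ + c₁*x + c₂*x^2 + c₃*x^3 + c₄*x^4) (p q : ℝ) :
    (p - q)^2 * iteratedDeriv 2 f q + 6*(p - q) * deriv f q + 12 * f q =
      quarticPolarForm c₀ c₁ c₂ c₃ c₄ p q := by
  obtain rfl : f = fun x => c₀ + c₁*x + c₂*x^2 + c₃*x^3 + c₄*x^4 := funext hf
  rw [iteratedDeriv_two_quartic, deriv_quartic, quarticPolarForm]
  ring

theorem stmt_4 (lam a₀ a₁ a₂ a₃ a₄ b₀ b₁ b₂ b₃ b₄ : ℝ)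
    (P : ℝ → ℝ) (Q : ℝ → ℝ)
    (hPdef : ∀ p, P p = a₀ + a₁*p + a₂*p^2 + a₃*p^3 + a₄*p^4)
    (hQdef : ∀ q, Q q = b₀ + b₁*q + b₂*q^2 + b₃*q^3 + b₄*q^4) :
    (∀ p q : ℝ,
      (p - q)^2 * iteratedDeriv 2 Q q + 6*(p - q) * deriv Q q + 12 * Q q =
      (p - q)^2 * iteratedDeriv 2 P p - 6*(p - q) * deriv P p + 12 * P p
        + 4*lam*(1 - p^2*q^2))
    ↔ (b₀ = a₀ + lam/3 ∧ b₁ = a₁ ∧ b₂ = a₂ ∧ b₃ = a₃ ∧ b₄ = a₄ - lam/3) := by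
  have hP (p q : ℝ) : (p - q)^2 * iteratedDeriv 2 P p - 6*(p - q) * deriv P p + 12 * P p =
      quarticPolarForm a₀ a₁ a₂ a₃ a₄ p q := by
    rw [quarticPolarForm_comm, ← taylor_quartic_eq_quarticPolarForm hPdef]
    ring
  have hdiff (p q : ℝ) :
      quarticPolarForm b₀ b₁ b₂ b₃ b₄ p q - (quarticPolarForm a₀ a₁ a₂ a₃ a₄ p q
        + 4*lam*(1 - p^2*q^2)) =
      quarticPolarForm (b₀ - a₀ - lam/3) (b₁ - a₁) (b₂ - a₂) (b₃ - a₃) (b₄ - a₄ + lam/3) p q := by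
    unfold quarticPolarForm; ring
  calc _ ↔ ∀ p q, quarticPolarForm (b₀ - a₀ - lam/3) (b₁ - a₁) (b₂ - a₂) (b₃ - a₃)
          (b₄ - a₄ + lam/3) p q = 0 :=
        forall₂_congr fun p q => by
          rw [taylor_quartic_eq_quarticPolarForm hQdef, hP, ← hdiff, sub_eq_zero]
    _ ↔ _ := by
      rw [quarticPolarForm_eq_zero_iff]
      constructor <;> rintro ⟨h₀, h₁, h₂, h₃, h₄⟩ <;> refine ⟨?_, ?_, ?_, ?_, ?_⟩ <;> linarith
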